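/- arXiv:0805.0776 — 9 statements merged into one kernel-verified Lean document; each statement's English description precedes it below -/
import Mathlib

section
/- Let G be an N×N real symmetric matrix with characteristic polynomial p(λ) = a_N λ^N + ⋯ + a_1 λ + a_0, and let n ≤ N. If a_0 = a_1 = ⋯ = a_{N−n−1} = 0 and the remaining coefficients a_{N−n}, …, a_N are all nonzero and alternate in sign (that is, (−1)^{N−k} a_k > 0 for all k with N−n ≤ k ≤ N), then G is positive semidefinite and has rank exactly n. -/
/-!
Since `G` is symmetric, `p` splits over `ℝ` with the eigenvalues of `G` as roots. Alternating
signs make every term of `(-1)^N p(x)` nonnegative for `x < 0`, and the leading one positive,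
so `p` has no negative roots and `G` is positive semidefinite. The rank of a symmetric matrix
is `N` minus the multiplicity of `0` as an eigenvalue, i.e. minus the trailing degree of `p`,
which the vanishing pattern of the coefficients fixes at `N - n`.
-/

open Polynomial

namespace Polynomial

theorem eval_mul_neg_one_pow_pos_of_alternating {p : ℝ[X]} (hp : p ≠ 0)
    (halt : ∀ k ≤ p.natDegree, 0 ≤ (-1 : ℝ) ^ (p.natDegree - k) * p.coeff k)
    {x : ℝ} (hx : x < 0) : 0 < (-1 : ℝ) ^ p.natDegree * p.eval x := by
  set d := p.natDegree
  have hterm : ∀ k ∈ Finset.range (d + 1),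
      (-1 : ℝ) ^ d * (p.coeff k * x ^ k) = (-1 : ℝ) ^ (d - k) * p.coeff k * (-x) ^ k := by
    intro k hk
    rw [← Nat.sub_add_cancel (Finset.mem_range_succ_iff.mp hk), pow_add, neg_pow,
      Nat.add_sub_cancel]
    ring
  rw [eval_eq_sum_range, Finset.mul_sum, Finset.sum_congr rfl hterm]
  have hlead : 0 < (-1 : ℝ) ^ (d - d) * p.coeff d :=
    (halt d le_rfl).lt_of_ne' (by simpa [d] using leadingCoeff_ne_zero.mpr hp)
  refine Finset.sum_pos' (fun k hk => ?_) ⟨d, Finset.self_mem_range_succ d, ?_⟩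
  · exact mul_nonneg (halt k (Finset.mem_range_succ_iff.mp hk)) (pow_nonneg (by linarith) k)
  · exact mul_pos hlead (pow_pos (by linarith) d)

theorem nonneg_of_mem_roots_of_alternating {p : ℝ[X]}
    (halt : ∀ k ≤ p.natDegree, 0 ≤ (-1 : ℝ) ^ (p.natDegree - k) * p.coeff k)
    {x : ℝ} (hx : x ∈ p.roots) : 0 ≤ x := by
  have hp : p ≠ 0 := ne_zero_of_mem_roots hx
  by_contra! hneg
  have := eval_mul_neg_one_pow_pos_of_alternating hp halt hneg
  rw [(mem_roots hp).mp hx, mul_zero] at this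
  exact this.false

end Polynomial

namespace Matrix.IsHermitian

variable {m : Type*} [Fintype m] [DecidableEq m]

theorem posSemidef_of_nonneg_of_mem_roots_charpoly {A : Matrix m m ℝ} (hA : A.IsHermitian)
    (h : ∀ x ∈ A.charpoly.roots, 0 ≤ x) : A.PosSemidef :=
  hA.posSemidef_iff_eigenvalues_nonneg.mpr fun i =>
    h _ (hA.roots_charpoly_eq_eigenvalues ▸ Multiset.mem_map_of_mem _ (Finset.mem_univ_val i))

theorem rank_add_rootMultiplicity_zero {𝕜 : Type*} [RCLike 𝕜] {A : Matrix m m 𝕜}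
    (hA : A.IsHermitian) : A.rank + A.charpoly.rootMultiplicity 0 = Fintype.card m := by
  classical
  have hmult : A.charpoly.rootMultiplicity 0 = Fintype.card {i // hA.eigenvalues i = 0} := by
    rw [← count_roots, hA.roots_charpoly_eq_eigenvalues, Multiset.count_map,
      Fintype.card_subtype]
    simp only [Finset.card, Finset.filter_val, Function.comp_apply, @eq_comm 𝕜 0,
      RCLike.ofReal_eq_zero]
  rw [hA.rank_eq_card_non_zero_eigs, hmult, add_comm, Fintype.card_subtype_compl,
    Nat.add_sub_cancel' (Fintype.card_subtype_le _)]

end Matrix.IsHermitian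

/-- For an `N × N` real symmetric matrix `G` with characteristic polynomial
`p(λ) = a_N λ^N + ⋯ + a_1 λ + a_0` and `n ≤ N`: if `a_0 = ⋯ = a_{N-n-1} = 0`
and the remaining coefficients `a_{N-n}, …, a_N` are nonzero and alternate in sign
(`(-1)^(N-k) a_k > 0` for `N - n ≤ k ≤ N`), then `G` is positive semidefinite and
has rank exactly `n`. -/
theorem posSemidef_and_rank_eq_of_charpoly_coeffs (N n : ℕ) (hn : n ≤ N)
    (G : Matrix (Fin N) (Fin N) ℝ) (hsymm : G.IsSymm)
    (h0 : ∀ k, k < N - n → G.charpoly.coeff k = 0)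
    (halt : ∀ k, N - n ≤ k → k ≤ N → 0 < (-1 : ℝ) ^ (N - k) * G.charpoly.coeff k) :
    G.PosSemidef ∧ G.rank = n := by
  have hG : G.IsHermitian := by
    rwa [Matrix.IsHermitian, Matrix.conjTranspose_eq_transpose_of_trivial]
  have hdeg : G.charpoly.natDegree = N := by
    rw [Matrix.charpoly_natDegree_eq_dim, Fintype.card_fin]
  have hsign : ∀ k ≤ G.charpoly.natDegree,
      0 ≤ (-1 : ℝ) ^ (G.charpoly.natDegree - k) * G.charpoly.coeff k := by
    intro k hk
    rw [hdeg] at hk ⊢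
    rcases lt_or_ge k (N - n) with hlow | hhigh
    · simp [h0 k hlow]
    · exact (halt k hhigh hk).le
  have htrailing : G.charpoly.natTrailingDegree = N - n := by
    refine le_antisymm (natTrailingDegree_le_of_ne_zero fun hzero => ?_)
      (le_natTrailingDegree G.charpoly_monic.ne_zero h0)
    simpa [hzero] using halt (N - n) le_rfl (Nat.sub_le N n)
  refine ⟨hG.posSemidef_of_nonneg_of_mem_roots_charpoly
    fun x hx => nonneg_of_mem_roots_of_alternating hsign hx, ?_⟩
  have hrank := hG.rank_add_rootMultiplicity_zero
  rw [rootMultiplicity_eq_natTrailingDegree', htrailing, Fintype.card_fin] at hrank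
  omega
end

section
/- There exist 20 unit vectors x_1, …, x_20 in EuclideanSpace ℝ (Fin 6) such that ⟨x_i, x_j⟩ ≤ 3/14 for all i ≠ j. -/
/-!
The code is given by its Gram matrix `G`, whose off-diagonal entries all lie in
`{3/14, 0, -1/14, -5/14, -3/7, -4/7, -9/14}`. An `LDLᵀ` factorisation `G = P · diag (w / b) · Pᵀ`,
taken with respect to the first six points (which form a basis), has `P` integral after clearing
denominators; the `i`-th point then has coordinates `P i k * √(w k / b)`. Both the unit norms and
the bound `3/14` reduce to identities and inequalities between integers, checked by `decide`.
-/

open scoped InnerProductSpace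

namespace SphericalCode

variable {ι : Type*} [Fintype ι]

def weightedDot (w : ι → ℕ) (p q : ι → ℤ) : ℤ :=
  ∑ k, p k * q k * w k

noncomputable def scaledVec (w : ι → ℕ) (b : ℕ) (p : ι → ℤ) : EuclideanSpace ℝ ι :=
  WithLp.toLp 2 fun k => p k * √((w k : ℝ) / b)

theorem inner_scaledVec (w : ι → ℕ) (b : ℕ) (p q : ι → ℤ) :
    ⟪scaledVec w b p, scaledVec w b q⟫_ℝ = weightedDot w p q / b := by
  simp only [PiLp.inner_apply, scaledVec, weightedDot, RCLike.inner_apply, conj_trivial,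
    Int.cast_sum, Int.cast_mul, Int.cast_natCast, Finset.sum_div]
  refine Finset.sum_congr rfl fun k _ => ?_
  have hsq : √((w k : ℝ) / b) * √((w k : ℝ) / b) = w k / b :=
    Real.mul_self_sqrt (by positivity)
  linear_combination (p k : ℝ) * q k * hsq

theorem norm_scaledVec_eq_one {w : ι → ℕ} {b : ℕ} {p : ι → ℤ} (hb : b ≠ 0)
    (h : weightedDot w p p = b) : ‖scaledVec w b p‖ = 1 := by
  have hinner : ⟪scaledVec w b p, scaledVec w b p⟫_ℝ = 1 := by
    rw [inner_scaledVec, h, Int.cast_natCast, div_self (Nat.cast_ne_zero.mpr hb)]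
  rwa [real_inner_self_eq_norm_sq, pow_eq_one_iff_of_nonneg (norm_nonneg _) two_ne_zero] at hinner

theorem inner_scaledVec_le {w : ι → ℕ} {b : ℕ} {p q : ι → ℤ} (hb : b ≠ 0) {num den : ℕ}
    (hden : den ≠ 0) (h : den * weightedDot w p q ≤ num * b) :
    ⟪scaledVec w b p, scaledVec w b q⟫_ℝ ≤ num / den := by
  have hb' : (0 : ℝ) < b := by positivity
  have hden' : (0 : ℝ) < den := by positivity
  have h' : (den : ℝ) * weightedDot w p q ≤ num * b := by exact_mod_cast h
  rw [inner_scaledVec, div_le_div_iff₀ hb' hden']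
  linarith

theorem exists_of_weightedDot {N : Type*} (P : N → ι → ℤ) (w : ι → ℕ) {b : ℕ} (hb : b ≠ 0)
    {num den : ℕ} (hden : den ≠ 0) (hnorm : ∀ i, weightedDot w (P i) (P i) = b)
    (hinner : ∀ i j, i ≠ j → den * weightedDot w (P i) (P j) ≤ num * b) :
    ∃ x : N → EuclideanSpace ℝ ι,
      (∀ i, ‖x i‖ = 1) ∧ ∀ i j, i ≠ j → ⟪x i, x j⟫_ℝ ≤ num / den :=
  ⟨fun i => scaledVec w b (P i), fun i => norm_scaledVec_eq_one hb (hnorm i),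
    fun i j hij => inner_scaledVec_le hb hden (hinner i j hij)⟩

end SphericalCode

namespace SphericalCode20Dim6

def weights : Fin 6 → ℕ := ![17765, 95, 3990, 1190, 119, 2261]

def scale : ℕ := 3481940

def coords : Fin 20 → Fin 6 → ℤ :=
  ![![14, 0, 0, 0, 0, 0],
    ![3, 187, 0, 0, 0, 0],
    ![-8, 66, 22, 0, 0, 0],
    ![3, -9, -20, 38, 0, 0],
    ![3, 33, 11, -33, 110, 0],
    ![0, -70, -12, -6, 96, 24],
    ![-5, 57, -15, -3, 105, -15],
    ![-1, -123, -7, 3, -105, 15],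
    ![3, 33, 11, 33, -110, 0],
    ![3, -135, -11, -9, 30, -20],
    ![3, 33, 11, 11, 33, -33],
    ![3, 33, 11, 33, 99, 11],
    ![3, 33, -23, -27, -43, 3],
    ![-6, 4, -10, 6, -96, -24],
    ![-9, 69, -11, 9, -30, 20],
    ![3, -121, 22, 0, 0, 0],
    ![3, 33, 11, -11, -33, 33],
    ![3, 33, 11, -33, -99, -11],
    ![-9, -99, 1, 27, 43, -3],
    ![-9, -57, -2, -38, 0, 0]]

theorem weightedDot_self (i : Fin 20) :
    SphericalCode.weightedDot weights (coords i) (coords i) = scale := by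
  revert i; decide

theorem weightedDot_le (i j : Fin 20) (hij : i ≠ j) :
    14 * SphericalCode.weightedDot weights (coords i) (coords j) ≤ 3 * scale := by
  revert i j; decide

end SphericalCode20Dim6

open SphericalCode20Dim6 in
/-- There exist 20 unit vectors in `EuclideanSpace ℝ (Fin 6)` whose pairwise
inner products are all at most `3/14`. -/
theorem exists_spherical_code_20_points_dim6 :
    ∃ x : Fin 20 → EuclideanSpace ℝ (Fin 6),
      (∀ i, ‖x i‖ = 1) ∧ ∀ i j, i ≠ j → ⟪x i, x j⟫_ℝ ≤ 3 / 14 := by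
  have h := SphericalCode.exists_of_weightedDot coords weights (b := scale) (by decide)
    (num := 3) (den := 14) (by decide) weightedDot_self weightedDot_le
  simpa using h
end

section
/- There exist 20 unit vectors x_1, …, x_20 in EuclideanSpace ℝ (Fin 6) such that for all i ≠ j the inner product ⟨x_i, x_j⟩ lies in the set {3/14, 0, −1/14, −5/14, −3/7, −4/7, −9/14}, and for each fixed index i there are exactly 11 indices j ≠ i with ⟨x_i, x_j⟩ = 3/14, exactly 3 indices j ≠ i with ⟨x_i, x_j⟩ = −9/14, and each of the values 0, −1/14, −5/14, −3/7, −4/7 occurs for exactly one index j ≠ i. -/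
/-!
Scaled by `√14`, the twenty vectors are integer points of norm `14` in `ℤ⁸`, all orthogonal to
`(1, 2, 1, 0, 0, 0, 0, 0)` and `(0, 1, 1, 1, 1, 1, 1, 1)`. They therefore lie in a
`6`-dimensional subspace of `ℝ⁸`, which an orthonormal basis identifies isometrically with `ℝ⁶`.
Every condition on the inner products becomes a statement about the integer Gram matrix of the
twenty points, which is checked by computation.
-/

open scoped InnerProductSpace Classical
open Module Finset

section Realization

variable {E : Type*} [NormedAddCommGroup E] [InnerProductSpace ℝ E]

theorem exists_euclideanSpace_inner_eq_of_mem {ι : Type*} {K : Submodule ℝ E}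
    [FiniteDimensional ℝ K] {n : ℕ} (hK : finrank ℝ K = n) (v : ι → E) (hv : ∀ i, v i ∈ K) :
    ∃ y : ι → EuclideanSpace ℝ (Fin n), ∀ i j, ⟪y i, y j⟫_ℝ = ⟪v i, v j⟫_ℝ := by
  let b := (stdOrthonormalBasis ℝ K).reindex (finCongr hK)
  exact ⟨fun i => b.repr ⟨v i, hv i⟩, fun i j => by simp⟩

theorem mem_orthogonal_span_range {ι : Type*} {u : ι → E} {v : E}
    (h : ∀ k, ⟪u k, v⟫_ℝ = 0) : v ∈ (Submodule.span ℝ (Set.range u))ᗮ := by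
  have hle : Submodule.span ℝ (Set.range u) ≤ (ℝ ∙ v)ᗮ := Submodule.span_le.2 <| by
    rintro _ ⟨k, rfl⟩
    exact Submodule.mem_orthogonal_singleton_iff_inner_left.2 (h k)
  exact fun w hw => Submodule.mem_orthogonal_singleton_iff_inner_left.1 (hle hw)

theorem finrank_orthogonal_span_range [FiniteDimensional ℝ E] {m : ℕ} {u : Fin m → E}
    (hu : LinearIndependent ℝ u) :
    finrank ℝ (Submodule.span ℝ (Set.range u))ᗮ = finrank ℝ E - m := by
  have := Submodule.finrank_add_finrank_orthogonal (Submodule.span ℝ (Set.range u))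
  rw [finrank_span_eq_card hu, Fintype.card_fin] at this
  omega

theorem card_filter_inner_eq_intCast_div {ι : Type*} [Fintype ι] [DecidableEq ι]
    {x : ι → E} {G : ι → ι → ℤ} {d : ℝ} (hd : d ≠ 0)
    (hx : ∀ i j, ⟪x i, x j⟫_ℝ = G i j / d) (i : ι) (z : ℤ) :
    #{j | j ≠ i ∧ ⟪x i, x j⟫_ℝ = z / d} = #{j | j ≠ i ∧ G i j = z} := by
  congr 1
  refine filter_congr fun j _ => and_congr_right fun _ => ?_
  rw [hx, div_left_inj' hd, Int.cast_inj]

end Realization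

def intPoint {n : ℕ} (p : Fin n → ℤ) : EuclideanSpace ℝ (Fin n) :=
  WithLp.toLp 2 fun k => (p k : ℝ)

theorem inner_intPoint {n : ℕ} (p q : Fin n → ℤ) :
    ⟪intPoint p, intPoint q⟫_ℝ = ((p ⬝ᵥ q : ℤ) : ℝ) := by
  simp [intPoint, PiLp.inner_apply, dotProduct, mul_comm]

namespace SphericalCode20

def head : Fin 4 → Fin 3 → ℤ := ![![-2, 1, 0], ![2, -1, 0], ![0, -1, 2], ![0, 1, -2]]

def tail : Fin 4 → Fin 5 → ℤ :=
  ![![-2, 2, 0, 0, -1], ![-2, 2, 1, 0, 0], ![2, -2, -1, 0, 0], ![2, -2, 0, 0, 1]]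

/-- Point `5 a + s` is `head a` followed by the cyclic shift of `tail a` by `s`. -/
def code (i : Fin (4 * 5)) : Fin 8 → ℤ :=
  Fin.append (head i.divNat) fun k => tail i.divNat (k - i.modNat)

def normal : Fin 2 → Fin 8 → ℤ := ![![1, 2, 1, 0, 0, 0, 0, 0], ![0, 1, 1, 1, 1, 1, 1, 1]]

theorem normal_dotProduct_code : ∀ k i, normal k ⬝ᵥ code i = 0 := by decide

theorem code_dotProduct_self : ∀ i, code i ⬝ᵥ code i = 14 := by decide

theorem code_dotProduct_mem : ∀ i j, i ≠ j →
    code i ⬝ᵥ code j ∈ ({3, 0, -1, -5, -6, -8, -9} : Finset ℤ) := by decide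

theorem card_code_dotProduct_eq_three : ∀ i, #{j | j ≠ i ∧ code i ⬝ᵥ code j = 3} = 11 := by
  decide

theorem card_code_dotProduct_eq_neg_nine : ∀ i, #{j | j ≠ i ∧ code i ⬝ᵥ code j = -9} = 3 := by
  decide

theorem card_code_dotProduct_eq_of_mem : ∀ i, ∀ z ∈ ({0, -1, -5, -6, -8} : Finset ℤ),
    #{j | j ≠ i ∧ code i ⬝ᵥ code j = z} = 1 := by
  decide

theorem linearIndependent_normal : LinearIndependent ℝ fun k => intPoint (normal k) := by
  rw [linearIndependent_fin2]
  refine ⟨fun h => ?_, fun a h => ?_⟩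
  · simpa [intPoint, normal] using congrArg (· 1) h
  · simpa [intPoint, normal] using congrArg (· 0) h

theorem finrank_orthogonal_normal :
    finrank ℝ (Submodule.span ℝ (Set.range fun k => intPoint (normal k)))ᗮ = 6 := by
  rw [finrank_orthogonal_span_range linearIndependent_normal, finrank_euclideanSpace_fin]

theorem exists_inner_eq_dotProduct_div :
    ∃ x : Fin 20 → EuclideanSpace ℝ (Fin 6),
      ∀ i j, ⟪x i, x j⟫_ℝ = ((code i ⬝ᵥ code j : ℤ) : ℝ) / 14 := by
  obtain ⟨y, hy⟩ := exists_euclideanSpace_inner_eq_of_mem finrank_orthogonal_normal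
    (fun i => intPoint (code i))
    fun i => mem_orthogonal_span_range fun k => by
      rw [inner_intPoint, normal_dotProduct_code, Int.cast_zero]
  refine ⟨fun i => (√14)⁻¹ • y i, fun i j => ?_⟩
  have h14 : (√14)⁻¹ * (√14)⁻¹ = (14 : ℝ)⁻¹ := by
    rw [← mul_inv, Real.mul_self_sqrt (by norm_num)]
  rw [real_inner_smul_left, real_inner_smul_right, hy, inner_intPoint, ← mul_assoc, h14,
    inv_mul_eq_div]

end SphericalCode20

open SphericalCode20

/-- There exist 20 unit vectors in `EuclideanSpace ℝ (Fin 6)` such that all pairwise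
inner products lie in `{3/14, 0, -1/14, -5/14, -3/7, -4/7, -9/14}`, and from each point
the value `3/14` occurs exactly 11 times, `-9/14` exactly 3 times, and each of
`0, -1/14, -5/14, -3/7, -4/7` exactly once. -/
theorem exists_spherical_code_20_points_dim6_structure :
    ∃ x : Fin 20 → EuclideanSpace ℝ (Fin 6),
      (∀ i, ‖x i‖ = 1) ∧
      (∀ i j, i ≠ j →
        ⟪x i, x j⟫_ℝ ∈ ({3/14, 0, -1/14, -5/14, -3/7, -4/7, -9/14} : Set ℝ)) ∧
      (∀ i, (Finset.univ.filter fun j => j ≠ i ∧ ⟪x i, x j⟫_ℝ = 3/14).card = 11) ∧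
      (∀ i, (Finset.univ.filter fun j => j ≠ i ∧ ⟪x i, x j⟫_ℝ = -9/14).card = 3) ∧
      (∀ i, ∀ c ∈ ({0, -1/14, -5/14, -3/7, -4/7} : Set ℝ),
        (Finset.univ.filter fun j => j ≠ i ∧ ⟪x i, x j⟫_ℝ = c).card = 1) := by
  obtain ⟨x, hx⟩ := exists_inner_eq_dotProduct_div
  have hcard := card_filter_inner_eq_intCast_div (by norm_num : (14 : ℝ) ≠ 0) hx
  refine ⟨x, fun i => ?_, fun i j hij => ?_, fun i => ?_, fun i => ?_, fun i c hc => ?_⟩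
  · rw [norm_eq_sqrt_real_inner, hx, code_dotProduct_self]
    norm_num
  · have hmem := code_dotProduct_mem i j hij
    simp only [mem_insert, mem_singleton] at hmem
    rw [hx]
    rcases hmem with h | h | h | h | h | h | h <;> rw [h] <;> norm_num
  · simpa using (hcard i 3).trans (card_code_dotProduct_eq_three i)
  · simpa using (hcard i (-9)).trans (card_code_dotProduct_eq_neg_nine i)
  · have hone (z : ℤ) (hz : z ∈ ({0, -1, -5, -6, -8} : Finset ℤ)) (hc : c = z / 14) :
        #{j | j ≠ i ∧ ⟪x i, x j⟫_ℝ = c} = 1 := by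
      rw [hc, hcard, card_code_dotProduct_eq_of_mem i z hz]
    simp only [Set.mem_insert_iff, Set.mem_singleton_iff] at hc
    rcases hc with rfl | rfl | rfl | rfl | rfl
    · exact hone 0 (by decide) (by norm_num)
    · exact hone (-1) (by decide) (by norm_num)
    · exact hone (-5) (by decide) (by norm_num)
    · exact hone (-6) (by decide) (by norm_num)
    · exact hone (-8) (by decide) (by norm_num)
end

section
/- Let u = (2√5 − 1)/19 (the positive root of 19u² + 2u − 1 = 0). There exist 24 unit vectors x_1, …, x_24 in EuclideanSpace ℝ (Fin 7) such that ⟨x_i, x_j⟩ ≤ u for all i ≠ j. -/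
/-!
The six axes `v_i` of the icosahedron (cyclic permutations of `(0, 1, ±φ)`) have pairwise
inner products `ε_ij φ` with `ε_ij = ±1`, and the Galois-conjugate frame `w_i` (`φ ↦ ψ`) has
inner products `ε_ij ψ` with the same signs. Put `x = (s a v_i, t b w_i, s t c)` for
`s, t = ±1`, with `a² = -uψ`, `b² = uφ`, `c² = u`. Since `φψ = -1`, two points on different
axes have inner product `u (αε - βε + αβ)` where `α = ss'`, `β = tt'`, and two points on the
same axis have `u (√5 (α + β) + αβ)`. Both are at most `u` except for `α = β = 1` on the same
axis, where the value `u (1 + 2√5) = 1` is the squared norm.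
-/

open scoped InnerProductSpace goldenRatio

open Real Matrix

def icosahedronAxis {R : Type*} [Ring R] (g : R) : Fin 6 → Fin 3 → R :=
  ![![0, 1, g], ![0, 1, -g], ![1, g, 0], ![1, -g, 0], ![g, 0, 1], ![-g, 0, 1]]

def stackVec (v w : Fin 3 → ℝ) (c : ℝ) : EuclideanSpace ℝ (Fin 7) :=
  WithLp.toLp 2 ![v 0, v 1, v 2, w 0, w 1, w 2, c]

lemma inner_stackVec (v w v' w' : Fin 3 → ℝ) (c c' : ℝ) :
    ⟪stackVec v w c, stackVec v' w' c'⟫_ℝ = v ⬝ᵥ v' + w ⬝ᵥ w' + c * c' := by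
  simp [stackVec, PiLp.inner_apply, dotProduct, Fin.sum_univ_succ]
  ring

section
variable {R : Type*} [CommRing R]

lemma icosahedronAxis_dotProduct_self (g : R) (i : Fin 6) :
    icosahedronAxis g i ⬝ᵥ icosahedronAxis g i = 1 + g ^ 2 := by
  fin_cases i <;> simp [icosahedronAxis, dotProduct, Fin.sum_univ_succ] <;> ring

lemma exists_units_icosahedronAxis_dotProduct {g h : R} (hg : g ^ 2 = g + 1)
    (hh : h ^ 2 = h + 1) {i j : Fin 6} (hij : i ≠ j) :
    ∃ ε : ℤˣ, icosahedronAxis g i ⬝ᵥ icosahedronAxis g j = (ε : ℤ) * g ∧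
      icosahedronAxis h i ⬝ᵥ icosahedronAxis h j = (ε : ℤ) * h := by
  fin_cases i <;> fin_cases j <;> first
    | exact absurd rfl hij
    | (refine ⟨1, ?_, ?_⟩ <;> simp [icosahedronAxis, dotProduct, Fin.sum_univ_succ] <;> done)
    | (refine ⟨-1, ?_, ?_⟩ <;> simp [icosahedronAxis, dotProduct, Fin.sum_univ_succ] <;>
        first | done | linear_combination -hg | linear_combination -hh)
end

lemma units_mul_sub_mul_add_mul_le_one (α β ε : ℤˣ) :
    (α : ℤ) * ε - β * ε + α * β ≤ 1 := by
  revert α β ε; decide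

lemma sqrt_five_mul_add_add_mul_le_one {α β : ℤˣ} (h : ¬(α = 1 ∧ β = 1)) :
    √5 * ((α : ℤ) + (β : ℤ) : ℝ) + (α : ℤ) * (β : ℤ) ≤ 1 := by
  rcases Int.units_eq_one_or α with rfl | rfl <;> rcases Int.units_eq_one_or β with rfl | rfl <;>
    simp at h ⊢
  linarith [Real.sqrt_nonneg 5]

noncomputable def goldenCode (u : ℝ) : Fin 6 × ℤˣ × ℤˣ → EuclideanSpace ℝ (Fin 7)
  | (i, s, t) =>
    stackVec (((s : ℤ) * √(-u * ψ) : ℝ) • icosahedronAxis φ i)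
      (((t : ℤ) * √(u * φ) : ℝ) • icosahedronAxis ψ i) ((s : ℤ) * (t : ℤ) * √u)

lemma inner_goldenCode {u : ℝ} (hu : 0 ≤ u) (i j : Fin 6) (s t s' t' : ℤˣ) :
    ⟪goldenCode u (i, s, t), goldenCode u (j, s', t')⟫_ℝ =
      u * (-((s * s' : ℤˣ) : ℤ) * ψ * (icosahedronAxis φ i ⬝ᵥ icosahedronAxis φ j) +
        ((t * t' : ℤˣ) : ℤ) * φ * (icosahedronAxis ψ i ⬝ᵥ icosahedronAxis ψ j) +
        ((s * s' * (t * t') : ℤˣ) : ℤ)) := by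
  have ha : √(-u * ψ) ^ 2 = -u * ψ := sq_sqrt (by nlinarith [goldenConj_neg])
  have hb : √(u * φ) ^ 2 = u * φ := sq_sqrt (by nlinarith [goldenRatio_pos])
  have hc : √u ^ 2 = u := sq_sqrt hu
  simp only [goldenCode, inner_stackVec, smul_dotProduct, dotProduct_smul, smul_eq_mul]
  push_cast
  linear_combination
    ((s : ℤ) * (s' : ℤ) * (icosahedronAxis φ i ⬝ᵥ icosahedronAxis φ j) : ℝ) * ha
    + ((t : ℤ) * (t' : ℤ) * (icosahedronAxis ψ i ⬝ᵥ icosahedronAxis ψ j) : ℝ) * hb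
    + ((s : ℤ) * (s' : ℤ) * (t : ℤ) * (t' : ℤ) : ℝ) * hc

lemma inner_goldenCode_same_axis {u : ℝ} (hu : 0 ≤ u) (i : Fin 6) (s t s' t' : ℤˣ) :
    ⟪goldenCode u (i, s, t), goldenCode u (i, s', t')⟫_ℝ =
      u * (√5 * (((s * s' : ℤˣ) : ℤ) + ((t * t' : ℤˣ) : ℤ) : ℝ) +
        ((s * s' : ℤˣ) : ℤ) * ((t * t' : ℤˣ) : ℤ)) := by
  have hφ : φ * (1 + ψ ^ 2) = √5 := by
    linear_combination goldenRatio_mul_goldenConj + φ * goldenConj_sq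
  have hψ : -ψ * (1 + φ ^ 2) = √5 := by
    linear_combination -goldenRatio_mul_goldenConj - ψ * goldenRatio_sq
  rw [inner_goldenCode hu, icosahedronAxis_dotProduct_self, icosahedronAxis_dotProduct_self]
  push_cast
  linear_combination
    u * ((s : ℤ) * (s' : ℤ) : ℝ) * hψ + u * ((t : ℤ) * (t' : ℤ) : ℝ) * hφ

lemma exists_inner_goldenCode_eq {u : ℝ} (hu : 0 ≤ u) {i j : Fin 6} (hij : i ≠ j)
    (s t s' t' : ℤˣ) : ∃ ε : ℤˣ, ⟪goldenCode u (i, s, t), goldenCode u (j, s', t')⟫_ℝ =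
      u * (((s * s' : ℤˣ) : ℤ) * ε - ((t * t' : ℤˣ) : ℤ) * ε +
        ((s * s' : ℤˣ) : ℤ) * ((t * t' : ℤˣ) : ℤ) : ℤ) := by
  obtain ⟨ε, hφ, hψ⟩ :=
    exists_units_icosahedronAxis_dotProduct goldenRatio_sq goldenConj_sq hij
  refine ⟨ε, ?_⟩
  rw [inner_goldenCode hu, hφ, hψ]
  push_cast
  linear_combination
    u * ((ε : ℤ) * ((t : ℤ) * (t' : ℤ) - (s : ℤ) * (s' : ℤ)) : ℝ) * goldenRatio_mul_goldenConj

lemma inner_goldenCode_le {u : ℝ} (hu : 0 ≤ u) {p q : Fin 6 × ℤˣ × ℤˣ} (hpq : p ≠ q) :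
    ⟪goldenCode u p, goldenCode u q⟫_ℝ ≤ u := by
  obtain ⟨i, s, t⟩ := p
  obtain ⟨j, s', t'⟩ := q
  by_cases hij : i = j
  · subst hij
    rw [inner_goldenCode_same_axis hu]
    refine mul_le_of_le_one_right hu (sqrt_five_mul_add_add_mul_le_one ?_)
    rintro ⟨hs, ht⟩
    exact hpq (by rw [mul_eq_one_iff_eq_inv.mp hs, mul_eq_one_iff_eq_inv.mp ht]; simp)
  · obtain ⟨ε, h⟩ := exists_inner_goldenCode_eq hu hij s t s' t'
    rw [h]
    exact mul_le_of_le_one_right hu (by exact_mod_cast units_mul_sub_mul_add_mul_le_one _ _ ε)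

lemma norm_goldenCode {u : ℝ} (hu : u * (1 + 2 * √5) = 1) (p : Fin 6 × ℤˣ × ℤˣ) :
    ‖goldenCode u p‖ = 1 := by
  have hu₀ : 0 ≤ u := by
    by_contra! h
    nlinarith [Real.sqrt_nonneg 5]
  obtain ⟨i, s, t⟩ := p
  have h := inner_goldenCode_same_axis hu₀ i s t s t
  simp only [Int.units_mul_self, Units.val_one, Int.cast_one] at h
  rw [real_inner_self_eq_norm_sq] at h
  exact (pow_eq_one_iff_of_nonneg (norm_nonneg _) two_ne_zero).mp (by linear_combination h + hu)

/-- Let `u = (2√5 - 1)/19`, the positive root of `19u² + 2u - 1 = 0`. There exist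
24 unit vectors in `EuclideanSpace ℝ (Fin 7)` whose pairwise inner products are all
at most `u`. -/
theorem exists_spherical_code_24_points_dim7 :
    ∀ u : ℝ, u = (2 * Real.sqrt 5 - 1) / 19 →
      ∃ x : Fin 24 → EuclideanSpace ℝ (Fin 7),
        (∀ i, ‖x i‖ = 1) ∧ ∀ i j, i ≠ j → ⟪x i, x j⟫_ℝ ≤ u := by
  rintro u rfl
  have hu : (2 * √5 - 1) / 19 * (1 + 2 * √5) = 1 := by
    linear_combination (4 / 19 : ℝ) * Real.sq_sqrt (show (0 : ℝ) ≤ 5 by norm_num)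
  have hu₀ : 0 ≤ (2 * √5 - 1) / 19 := by
    have : 1 ≤ √5 := Real.one_le_sqrt.mpr (by norm_num)
    linarith
  let e : Fin 24 ≃ Fin 6 × ℤˣ × ℤˣ := Fintype.equivOfCardEq (by simp)
  exact ⟨goldenCode _ ∘ e, fun k => norm_goldenCode hu (e k),
    fun k l hkl => inner_goldenCode_le hu₀ (e.injective.ne hkl)⟩
end

section
/- Let u = (2√5 − 1)/19 (the positive root of 19u² + 2u − 1 = 0). There exist 24 unit vectors x_1, …, x_24 in EuclideanSpace ℝ (Fin 7) such that for all i ≠ j the inner product ⟨x_i, x_j⟩ lies in the set {u, −u, −3u, 2u − 1}, and for each fixed index i there are exactly 15 indices j ≠ i with ⟨x_i, x_j⟩ = u, exactly 2 with ⟨x_i, x_j⟩ = −u, exactly 5 with ⟨x_i, x_j⟩ = −3u, and exactly 1 with ⟨x_i, x_j⟩ = 2u − 1. -/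
/-!
The first six coordinates of each point are a signed pair of icosahedron vertices, i.e. cyclic
permutations of `(0, ±2, ±(1 + √5))`, scaled by `√((11 - 3√5)/152)`; the seventh is `±√u`.
With these weights `152 ⟪xᵢ, xⱼ⟫` is the image of an element of `ℤ√5`, and `ℤ√5 → ℝ` is injective
because `5` is not a square, so every claim about the inner products is an identity in `ℤ√5`
that is checked by evaluation.
-/

open scoped InnerProductSpace Classical

theorem inner_toLp_sqrt_mul {ι : Type*} [Fintype ι] {w : ι → ℝ} (hw : ∀ k, 0 ≤ w k)
    (x y : ι → ℝ) :
    ⟪(WithLp.toLp 2 fun k => √(w k) * x k : EuclideanSpace ℝ ι),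
      WithLp.toLp 2 fun k => √(w k) * y k⟫_ℝ = ∑ k, w k * (x k * y k) := by
  simp only [PiLp.inner_apply, RCLike.inner_apply, conj_trivial]
  refine Finset.sum_congr rfl fun k _ => ?_
  linear_combination (x k * y k) * Real.mul_self_sqrt (hw k)

namespace SphericalCode24

noncomputable abbrev toReal5 : ℤ√5 →+* ℝ := Zsqrtd.toReal (by norm_num)

theorem toReal5_injective : Function.Injective toReal5 :=
  Zsqrtd.toReal_injective _ fun n h => by
    have : n ≤ 2 := by nlinarith
    have : -2 ≤ n := by nlinarith
    interval_cases n <;> omega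

theorem toReal5_mk (a b : ℤ) : toReal5 ⟨a, b⟩ = a + b * √5 := by
  simp [Zsqrtd.toReal]

def ρ : ℤ√5 := ⟨-8, 16⟩

theorem toReal5_ρ_div : toReal5 ρ / 152 = (2 * √5 - 1) / 19 := by
  rw [ρ, toReal5_mk]
  push_cast
  ring

def weight : Fin 7 → ℤ√5 :=
  ![⟨11, -3⟩, ⟨11, -3⟩, ⟨11, -3⟩, ⟨11, -3⟩, ⟨11, -3⟩, ⟨11, -3⟩, ρ]

theorem weight_nonneg (k : Fin 7) : 0 ≤ toReal5 (weight k) / 152 := by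
  have h5 := Real.sq_sqrt (show (0 : ℝ) ≤ 5 by norm_num)
  have : 2 < √5 := by nlinarith [Real.sqrt_nonneg 5]
  have : √5 < 3 := by nlinarith [Real.sqrt_nonneg 5]
  fin_cases k <;> norm_num [weight, ρ, toReal5_mk] <;> linarith

local notation "ω" => (⟨1, 1⟩ : ℤ√5)

def coord : Fin 24 → Fin 7 → ℤ√5 :=
  ![![0, 2, ω, 0, 2, ω, 1],
    ![0, 2, ω, 0, -2, -ω, -1],
    ![0, -2, -ω, 0, 2, ω, -1],
    ![0, -2, -ω, 0, -2, -ω, 1],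
    ![0, 2, -ω, 2, ω, 0, 1],
    ![0, 2, -ω, -2, -ω, 0, -1],
    ![0, -2, ω, 2, ω, 0, -1],
    ![0, -2, ω, -2, -ω, 0, 1],
    ![2, ω, 0, 2, -ω, 0, 1],
    ![2, ω, 0, -2, ω, 0, -1],
    ![-2, -ω, 0, 2, -ω, 0, -1],
    ![-2, -ω, 0, -2, ω, 0, 1],
    ![2, -ω, 0, ω, 0, 2, 1],
    ![2, -ω, 0, -ω, 0, -2, -1],
    ![-2, ω, 0, ω, 0, 2, -1],
    ![-2, ω, 0, -ω, 0, -2, 1],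
    ![ω, 0, 2, 0, 2, -ω, 1],
    ![ω, 0, 2, 0, -2, ω, -1],
    ![-ω, 0, -2, 0, 2, -ω, -1],
    ![-ω, 0, -2, 0, -2, ω, 1],
    ![-ω, 0, 2, -ω, 0, 2, -1],
    ![-ω, 0, 2, ω, 0, -2, 1],
    ![ω, 0, -2, -ω, 0, 2, 1],
    ![ω, 0, -2, ω, 0, -2, -1]]

def gram (i j : Fin 24) : ℤ√5 := ∑ k, weight k * (coord i k * coord j k)

theorem gram_self : ∀ i, gram i i = 152 := by decide

theorem gram_of_ne : ∀ i j, i ≠ j →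
    gram i j = ρ ∨ gram i j = -ρ ∨ gram i j = -3 * ρ ∨ gram i j = 2 * ρ - 152 := by
  decide

def valueCount (i : Fin 24) (v : ℤ√5) : ℕ :=
  (Finset.univ.filter fun j => j ≠ i ∧ gram i j = v).card

theorem valueCount_spec : ∀ i, valueCount i ρ = 15 ∧ valueCount i (-ρ) = 2 ∧
    valueCount i (-3 * ρ) = 5 ∧ valueCount i (2 * ρ - 152) = 1 := by
  decide

noncomputable def point (i : Fin 24) : EuclideanSpace ℝ (Fin 7) :=
  WithLp.toLp 2 fun k => √(toReal5 (weight k) / 152) * toReal5 (coord i k)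

theorem inner_point (i j : Fin 24) : ⟪point i, point j⟫_ℝ = toReal5 (gram i j) / 152 := by
  rw [point, point, inner_toLp_sqrt_mul weight_nonneg, gram, map_sum, Finset.sum_div]
  refine Finset.sum_congr rfl fun k _ => ?_
  rw [map_mul, map_mul]
  ring

theorem inner_point_eq_iff (i j : Fin 24) (v : ℤ√5) :
    ⟪point i, point j⟫_ℝ = toReal5 v / 152 ↔ gram i j = v := by
  rw [inner_point, div_left_inj' (by norm_num), toReal5_injective.eq_iff]

theorem norm_point (i : Fin 24) : ‖point i‖ = 1 := by
  have h : ⟪point i, point i⟫_ℝ = 1 := by rw [inner_point, gram_self, map_ofNat]; norm_num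
  rwa [real_inner_self_eq_norm_sq, pow_eq_one_iff_of_nonneg (norm_nonneg _) two_ne_zero] at h

theorem card_filter_inner_point_eq (i : Fin 24) (v : ℤ√5) :
    (Finset.univ.filter fun j => j ≠ i ∧ ⟪point i, point j⟫_ℝ = toReal5 v / 152).card =
      valueCount i v := by
  rw [valueCount]
  congr 1
  exact Finset.filter_congr fun j _ => and_congr_right' (inner_point_eq_iff i j v)

end SphericalCode24

open SphericalCode24

/-- Let `u = (2√5 - 1)/19`, the positive root of `19u² + 2u - 1 = 0`. There exist
24 unit vectors in `EuclideanSpace ℝ (Fin 7)` such that all pairwise inner products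
lie in `{u, -u, -3u, 2u - 1}`, and from each point the value `u` occurs exactly
15 times, `-u` exactly 2 times, `-3u` exactly 5 times, and `2u - 1` exactly once. -/
theorem exists_spherical_code_24_points_dim7_structure :
    ∀ u : ℝ, u = (2 * Real.sqrt 5 - 1) / 19 →
      ∃ x : Fin 24 → EuclideanSpace ℝ (Fin 7),
        (∀ i, ‖x i‖ = 1) ∧
        (∀ i j, i ≠ j → ⟪x i, x j⟫_ℝ ∈ ({u, -u, -3*u, 2*u - 1} : Set ℝ)) ∧
        (∀ i, (Finset.univ.filter fun j => j ≠ i ∧ ⟪x i, x j⟫_ℝ = u).card = 15) ∧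
        (∀ i, (Finset.univ.filter fun j => j ≠ i ∧ ⟪x i, x j⟫_ℝ = -u).card = 2) ∧
        (∀ i, (Finset.univ.filter fun j => j ≠ i ∧ ⟪x i, x j⟫_ℝ = -3*u).card = 5) ∧
        (∀ i, (Finset.univ.filter fun j => j ≠ i ∧ ⟪x i, x j⟫_ℝ = 2*u - 1).card = 1) := by
  intro u hu
  rw [← toReal5_ρ_div] at hu
  have hneg : -u = toReal5 (-ρ) / 152 := by rw [hu, map_neg, neg_div]
  have hneg3 : -3 * u = toReal5 (-3 * ρ) / 152 := by
    rw [hu, map_mul, map_neg, map_ofNat]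
    ring
  have hantipodal : 2 * u - 1 = toReal5 (2 * ρ - 152) / 152 := by
    rw [hu, map_sub, map_mul, map_ofNat, map_ofNat]
    ring
  rw [hneg, hneg3, hantipodal, hu]
  refine ⟨point, norm_point, fun i j hij => ?_, fun i => ?_, fun i => ?_, fun i => ?_,
    fun i => ?_⟩
  · simpa only [Set.mem_insert_iff, Set.mem_singleton_iff, inner_point_eq_iff]
      using gram_of_ne i j hij
  · exact (card_filter_inner_point_eq i ρ).trans (valueCount_spec i).1
  · exact (card_filter_inner_point_eq i _).trans (valueCount_spec i).2.1
  · exact (card_filter_inner_point_eq i _).trans (valueCount_spec i).2.2.1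
  · exact (card_filter_inner_point_eq i _).trans (valueCount_spec i).2.2.2
end

section
/- There exist 10 unit vectors x_1, …, x_10 in EuclideanSpace ℝ (Fin 4) such that ⟨x_i, x_j⟩ ≤ 1/6 for all i ≠ j. -/
/-!
The ten vectors `5 e_a + 5 e_b - 2 (1, 1, 1, 1, 1)` of `ℝ⁵`, `a < b`, are the rescaled edge
midpoints of the regular simplex centred at the origin (the vertices of the rectified 4-simplex).
They have squared length `30`; two of them sharing an index have inner product `5`, two disjoint
ones `-15`. Scaled by `1 / √30` they form a spherical code with maximal inner product `1 / 6` in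
the hyperplane orthogonal to `(1, 1, 1, 1, 1)`, which is a copy of `ℝ⁴`.
-/

open scoped InnerProductSpace

section SphericalCode

variable {ι E F : Type*} [NormedAddCommGroup E] [InnerProductSpace ℝ E]
  [NormedAddCommGroup F] [InnerProductSpace ℝ F]

def IsSphericalCode (x : ι → E) (t : ℝ) : Prop :=
  (∀ i, ‖x i‖ = 1) ∧ ∀ i j, i ≠ j → ⟪x i, x j⟫_ℝ ≤ t

theorem IsSphericalCode.comp_linearIsometry {x : ι → E} {t : ℝ} (h : IsSphericalCode x t)
    (f : E →ₗᵢ[ℝ] F) : IsSphericalCode (f ∘ x) t :=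
  ⟨fun i => (f.norm_map _).trans (h.1 i),
    fun i j hij => (f.inner_map_map _ _).trans_le (h.2 i j hij)⟩

theorem IsSphericalCode.exists_euclideanSpace [FiniteDimensional ℝ E] {n : ℕ}
    (hE : Module.finrank ℝ E = n) {x : ι → E} {t : ℝ} (h : IsSphericalCode x t) :
    ∃ y : ι → EuclideanSpace ℝ (Fin n), IsSphericalCode y t :=
  ⟨_, h.comp_linearIsometry ((stdOrthonormalBasis ℝ E).reindex (finCongr hE)).repr.toLinearIsometry⟩

end SphericalCode

theorem EuclideanSpace.inner_toLp_intCast {ι : Type*} [Fintype ι] (a b : ι → ℤ) :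
    ⟪WithLp.toLp 2 (fun i => (a i : ℝ)), WithLp.toLp 2 (fun i => (b i : ℝ))⟫_ℝ =
      ((∑ i, a i * b i : ℤ) : ℝ) := by
  simp [PiLp.inner_apply, mul_comm]

namespace RectifiedSimplex

def edge : Fin 10 → Finset (Fin 5) :=
  ![{0, 1}, {0, 2}, {0, 3}, {0, 4}, {1, 2}, {1, 3}, {1, 4}, {2, 3}, {2, 4}, {3, 4}]

def pattern (k : Fin 10) (j : Fin 5) : ℤ :=
  if j ∈ edge k then 3 else -2

theorem sum_pattern : ∀ k, ∑ j, pattern k j = 0 := by decide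

theorem dot_pattern_self : ∀ k, ∑ j, pattern k j * pattern k j = 30 := by decide

theorem dot_pattern_le : ∀ k l, k ≠ l → ∑ j, pattern k j * pattern l j ≤ 5 := by decide

noncomputable def vec (k : Fin 10) : EuclideanSpace ℝ (Fin 5) :=
  (√30)⁻¹ • WithLp.toLp 2 (fun j => (pattern k j : ℝ))

theorem inner_vec (k l : Fin 10) :
    ⟪vec k, vec l⟫_ℝ = ((∑ j, pattern k j * pattern l j : ℤ) : ℝ) / 30 := by
  have h30 : (√30)⁻¹ * (√30)⁻¹ = (30 : ℝ)⁻¹ := by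
    rw [← mul_inv, Real.mul_self_sqrt (by norm_num)]
  rw [vec, vec, real_inner_smul_left, real_inner_smul_right, EuclideanSpace.inner_toLp_intCast,
    ← mul_assoc, h30, inv_mul_eq_div]

theorem isSphericalCode_vec : IsSphericalCode vec (1 / 6) := by
  refine ⟨fun k => ?_, fun k l hkl => ?_⟩
  · rw [norm_eq_sqrt_real_inner, inner_vec, dot_pattern_self]
    norm_num
  · have hdot : ((∑ j, pattern k j * pattern l j : ℤ) : ℝ) ≤ 5 := by
      exact_mod_cast dot_pattern_le k l hkl
    rw [inner_vec]
    linarith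

def ones : EuclideanSpace ℝ (Fin 5) := WithLp.toLp 2 (fun _ => 1)

theorem vec_mem_orthogonal_ones (k : Fin 10) : vec k ∈ (ℝ ∙ ones)ᗮ := by
  rw [Submodule.mem_orthogonal_singleton_iff_inner_right, vec, real_inner_smul_right]
  have := EuclideanSpace.inner_toLp_intCast (fun _ => 1) (pattern k)
  simp only [Int.cast_one, one_mul, sum_pattern, Int.cast_zero] at this
  rw [ones, this, mul_zero]

theorem finrank_orthogonal_ones : Module.finrank ℝ (ℝ ∙ ones)ᗮ = 4 := by
  have : Fact (Module.finrank ℝ (EuclideanSpace ℝ (Fin 5)) = 4 + 1) := ⟨finrank_euclideanSpace_fin⟩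
  refine Submodule.finrank_orthogonal_span_singleton fun h => ?_
  simpa [ones] using congrArg (· 0) h

end RectifiedSimplex

open RectifiedSimplex in
/-- There exist 10 unit vectors in `EuclideanSpace ℝ (Fin 4)` whose pairwise
inner products are all at most the stated bound. -/
theorem exists_spherical_code_10_points_dim4 :
    ∃ x : Fin 10 → EuclideanSpace ℝ (Fin 4),
      (∀ i, ‖x i‖ = 1) ∧ ∀ i j, i ≠ j → ⟪x i, x j⟫_ℝ ≤ 1 / 6 := by
  have hcode : IsSphericalCode (fun k => (⟨vec k, vec_mem_orthogonal_ones k⟩ : (ℝ ∙ ones)ᗮ))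
      (1 / 6) := isSphericalCode_vec
  exact hcode.exists_euclideanSpace finrank_orthogonal_ones
end

section
/- There exist 12 unit vectors x_1, …, x_12 in EuclideanSpace ℝ (Fin 4) such that ⟨x_i, x_j⟩ ≤ 1/4 for all i ≠ j. -/
/-!
The twelve points `x_k = (ζ ^ (2k), ζ ^ (3k)) / √2` of `ℂ² ≅ ℝ⁴`, with `ζ = exp (2πi / 12)`, lie on
the Clifford torus and satisfy `⟪x_i, x_j⟫ = (cos (2πm / 6) + cos (2πm / 4)) / 2` for `m = i - j`.
When `12 ∤ m` this is at most `1/4`: if `m ≡ 2 [4]` the second cosine is `-1`; if `4 ∣ m` then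
`m ≡ ±2 [6]` and the first cosine is `-1/2`; otherwise the second cosine is at most `0` and the
first at most `1/2`.
-/

open scoped InnerProductSpace

open Real

noncomputable def cliffordTorusPoint (α β : ℝ) : EuclideanSpace ℝ (Fin 4) :=
  (√2)⁻¹ • !₂[cos α, sin α, cos β, sin β]

theorem inner_cliffordTorusPoint (α β α' β' : ℝ) :
    ⟪cliffordTorusPoint α β, cliffordTorusPoint α' β'⟫_ℝ = (cos (α - α') + cos (β - β')) / 2 := by
  have h2 : (√2)⁻¹ * (√2)⁻¹ = (2 : ℝ)⁻¹ := by
    rw [← mul_inv, Real.mul_self_sqrt zero_le_two]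
  simp only [cliffordTorusPoint, PiLp.inner_apply, PiLp.smul_apply, smul_eq_mul,
    RCLike.inner_apply, ringHom_apply, Fin.sum_univ_four, Matrix.cons_val_zero,
    Matrix.cons_val_one, Matrix.cons_val, cos_sub]
  linear_combination (cos α * cos α' + sin α * sin α' + (cos β * cos β' + sin β * sin β')) * h2

theorem norm_cliffordTorusPoint (α β : ℝ) : ‖cliffordTorusPoint α β‖ = 1 := by
  rw [norm_eq_sqrt_real_inner, inner_cliffordTorusPoint]
  simp

theorem cos_two_pi_mul_int_div_le {N : ℕ} (hN : 0 < N) {m a : ℤ} (ha : 0 ≤ a)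
    (hlo : a ≤ m % N) (hhi : m % N ≤ N - a) :
    cos (2 * π * m / N) ≤ cos (2 * π * a / N) := by
  have hN' : (0 : ℝ) < N := by exact_mod_cast hN
  have hdiv : (m : ℝ) = (m % N : ℤ) + N * (m / N : ℤ) := by
    exact_mod_cast (Int.emod_add_mul_ediv m N).symm
  have hm : 2 * π * m / N = 2 * π * (m % N : ℤ) / N + (m / (N : ℤ) : ℤ) * (2 * π) := by
    rw [hdiv]
    field_simp
  rw [hm, cos_add_int_mul_two_pi]
  set r := m % (N : ℤ)
  have hbound {s : ℤ} (hs : a ≤ s) (hsN : 2 * s ≤ N) :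
      cos (2 * π * s / N) ≤ cos (2 * π * a / N) := by
    apply cos_le_cos_of_nonneg_of_le_pi (by positivity)
    · rw [div_le_iff₀ hN']
      have : (2 * s : ℝ) ≤ N := by exact_mod_cast hsN
      nlinarith [pi_pos]
    · gcongr
  rcases le_total (2 * r) N with h | h
  · exact hbound hlo h
  · have hsymm : cos (2 * π * r / N) = cos (2 * π * (N - r : ℤ) / N) := by
      rw [← cos_two_pi_sub]
      congr 1
      push_cast
      field_simp
    rw [hsymm]
    exact hbound (by omega) (by omega)

theorem cos_two_pi_mul_div_six_add_cos_two_pi_mul_div_four_le {m : ℤ} (hm : ¬ (12 : ℤ) ∣ m) :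
    cos (2 * π * m / 6) + cos (2 * π * m / 4) ≤ 1 / 2 := by
  have hhex {a : ℤ} (ha : 0 ≤ a) (hlo : a ≤ m % 6) (hhi : m % 6 ≤ 6 - a) :
      cos (2 * π * m / 6) ≤ cos (2 * π * a / 6) := by
    exact_mod_cast cos_two_pi_mul_int_div_le (N := 6) (by norm_num) ha hlo hhi
  have hsquare {a : ℤ} (ha : 0 ≤ a) (hlo : a ≤ m % 4) (hhi : m % 4 ≤ 4 - a) :
      cos (2 * π * m / 4) ≤ cos (2 * π * a / 4) := by
    exact_mod_cast cos_two_pi_mul_int_div_le (N := 4) (by norm_num) ha hlo hhi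
  have c1 : cos (2 * π * (1 : ℤ) / 6) = 1 / 2 := by rw [← cos_pi_div_three]; push_cast; ring_nf
  have c2 : cos (2 * π * (2 : ℤ) / 6) = -(1 / 2) := by
    rw [← cos_pi_div_three, ← cos_pi_sub]; push_cast; ring_nf
  have c3 : cos (2 * π * (1 : ℤ) / 4) = 0 := by rw [← cos_pi_div_two]; push_cast; ring_nf
  have c4 : cos (2 * π * (2 : ℤ) / 4) = -1 := by rw [← cos_pi]; push_cast; ring_nf
  have hle6 := cos_le_one (2 * π * m / 6)
  have hle4 := cos_le_one (2 * π * m / 4)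
  by_cases h2 : m % 4 = 2
  · linarith [hsquare (a := 2) (by norm_num) (by omega) (by omega)]
  by_cases h0 : m % 4 = 0
  · linarith [hhex (a := 2) (by norm_num) (by omega) (by omega)]
  · linarith [hhex (a := 1) (by norm_num) (by omega) (by omega),
      hsquare (a := 1) (by norm_num) (by omega) (by omega)]

/-- There exist 12 unit vectors in `EuclideanSpace ℝ (Fin 4)` whose pairwise
inner products are all at most the stated bound. -/
theorem exists_spherical_code_12_points_dim4 :
    ∃ x : Fin 12 → EuclideanSpace ℝ (Fin 4),
      (∀ i, ‖x i‖ = 1) ∧ ∀ i j, i ≠ j → ⟪x i, x j⟫_ℝ ≤ 1 / 4 := by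
  refine ⟨fun k => cliffordTorusPoint (2 * π * (k : ℕ) / 6) (2 * π * (k : ℕ) / 4),
    fun k => norm_cliffordTorusPoint _ _, fun i j hij => ?_⟩
  have hdiff (N : ℝ) :
      2 * π * (i : ℕ) / N - 2 * π * (j : ℕ) / N = 2 * π * (((i : ℕ) - (j : ℕ) : ℤ) : ℝ) / N := by
    push_cast
    ring
  have hij' : ¬ (12 : ℤ) ∣ (i : ℕ) - (j : ℕ) := by
    have := Fin.val_ne_of_ne hij
    omega
  rw [inner_cliffordTorusPoint, hdiff, hdiff]
  linarith [cos_two_pi_mul_div_six_add_cos_two_pi_mul_div_four_le hij']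
end

section
/- There exist 24 unit vectors x_1, …, x_24 in EuclideanSpace ℝ (Fin 4) such that ⟨x_i, x_j⟩ ≤ 1/2 for all i ≠ j. -/
open scoped InnerProductSpace

/-!
The 24 roots `±eᵢ ± eⱼ` of `D₄` (the vertices of the 24-cell) have squared length 2, and two
distinct roots have integer inner product at most 1. Dividing by `√2` gives 24 unit vectors
with pairwise inner products at most `1/2`.
-/

section Rescale

variable {E : Type*} [NormedAddCommGroup E] [InnerProductSpace ℝ E]

theorem norm_inv_smul_of_norm_eq {x : E} {r : ℝ} (hr : 0 < r) (hx : ‖x‖ = r) :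
    ‖r⁻¹ • x‖ = 1 := by
  rw [norm_smul, hx, Real.norm_of_nonneg (inv_nonneg.2 hr.le), inv_mul_cancel₀ hr.ne']

theorem inner_inv_smul_le_of_inner_le {x y : E} {r c : ℝ} (h : ⟪x, y⟫_ℝ ≤ c) :
    ⟪r⁻¹ • x, r⁻¹ • y⟫_ℝ ≤ c / r ^ 2 := by
  rw [real_inner_smul_left, real_inner_smul_right, ← mul_assoc, ← mul_inv, ← sq,
    div_eq_inv_mul]
  exact mul_le_mul_of_nonneg_left h (by positivity)

end Rescale

noncomputable def intVec {n : ℕ} (v : Fin n → ℤ) : EuclideanSpace ℝ (Fin n) :=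
  WithLp.toLp 2 fun k => (v k : ℝ)

theorem inner_intVec {n : ℕ} (v w : Fin n → ℤ) :
    ⟪intVec v, intVec w⟫_ℝ = ((∑ k, v k * w k : ℤ) : ℝ) := by
  simp only [intVec, PiLp.inner_apply, RCLike.inner_apply, conj_trivial,
    Int.cast_sum, Int.cast_mul, mul_comm]

theorem norm_intVec {n : ℕ} (v : Fin n → ℤ) :
    ‖intVec v‖ = √((∑ k, v k * v k : ℤ) : ℝ) := by
  rw [norm_eq_sqrt_real_inner, inner_intVec]

def d4Roots : Fin 24 → Fin 4 → ℤ :=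
  ![![1, 1, 0, 0], ![1, -1, 0, 0], ![-1, 1, 0, 0], ![-1, -1, 0, 0],
    ![1, 0, 1, 0], ![1, 0, -1, 0], ![-1, 0, 1, 0], ![-1, 0, -1, 0],
    ![1, 0, 0, 1], ![1, 0, 0, -1], ![-1, 0, 0, 1], ![-1, 0, 0, -1],
    ![0, 1, 1, 0], ![0, 1, -1, 0], ![0, -1, 1, 0], ![0, -1, -1, 0],
    ![0, 1, 0, 1], ![0, 1, 0, -1], ![0, -1, 0, 1], ![0, -1, 0, -1],
    ![0, 0, 1, 1], ![0, 0, 1, -1], ![0, 0, -1, 1], ![0, 0, -1, -1]]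

theorem d4Roots_sum_mul_self : ∀ i, ∑ k, d4Roots i k * d4Roots i k = 2 := by decide

theorem d4Roots_sum_mul_le_one :
    ∀ i j, i ≠ j → ∑ k, d4Roots i k * d4Roots j k ≤ 1 := by decide

/-- There exist 24 unit vectors in `EuclideanSpace ℝ (Fin 4)` whose pairwise
inner products are all at most the stated bound. -/
theorem exists_spherical_code_24_points_dim4 :
    ∃ x : Fin 24 → EuclideanSpace ℝ (Fin 4),
      (∀ i, ‖x i‖ = 1) ∧ ∀ i j, i ≠ j → ⟪x i, x j⟫_ℝ ≤ 1 / 2 := by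
  have h_norm (i : Fin 24) : ‖intVec (d4Roots i)‖ = √2 := by
    rw [norm_intVec, d4Roots_sum_mul_self, Int.cast_ofNat]
  refine ⟨fun i => (√2)⁻¹ • intVec (d4Roots i), fun i => ?_, fun i j hij => ?_⟩
  · exact norm_inv_smul_of_norm_eq (by positivity) (h_norm i)
  · have h_inner : ⟪intVec (d4Roots i), intVec (d4Roots j)⟫_ℝ ≤ 1 := by
      rw [inner_intVec]
      exact_mod_cast d4Roots_sum_mul_le_one i j hij
    simpa using inner_inv_smul_le_of_inner_le (r := √2) h_inner
end

section
/- There exist 16 unit vectors x_1, …, x_16 in EuclideanSpace ℝ (Fin 5) such that ⟨x_i, x_j⟩ ≤ 1/5 for all i ≠ j. -/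
/-!
The sixteen points are the normalized sign vectors `(±1, …, ±1) / √5` with an even number of
minus signs (the vertices of the 5-demicube). Sign vectors at Hamming distance `d` in dimension
`m` have normalized inner product `(m - 2d) / m`, and two distinct sign vectors with the same
product of coordinates cannot differ in a single coordinate, so here `d ≥ 2`.
-/

open scoped InnerProductSpace
open Finset

section SignVectors

variable {ι : Type*} [Fintype ι]

lemma Int.cast_units_mul_eq_ite (u v : ℤˣ) : ((u * v : ℤˣ) : ℝ) = if u = v then 1 else -1 := by
  rcases Int.units_eq_one_or u with rfl | rfl <;> rcases Int.units_eq_one_or v with rfl | rfl <;>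
    norm_num

lemma sum_units_mul_eq_card_sub_hammingDist (σ τ : ι → ℤˣ) :
    ∑ k, ((σ k * τ k : ℤˣ) : ℝ) = Fintype.card ι - 2 * hammingDist σ τ := by
  have hterm : ∀ k, ((σ k * τ k : ℤˣ) : ℝ) = 1 - 2 * if σ k ≠ τ k then 1 else 0 := by
    intro k
    rw [Int.cast_units_mul_eq_ite]
    split_ifs <;> simp_all; norm_num
  simp only [hterm, sum_sub_distrib, ← mul_sum, sum_boole, hammingDist]
  simp

noncomputable def normalizedSignVector (σ : ι → ℤˣ) : EuclideanSpace ℝ ι :=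
  WithLp.toLp 2 fun k => ((σ k : ℤ) : ℝ) / √(Fintype.card ι)

lemma inner_normalizedSignVector (σ τ : ι → ℤˣ) :
    ⟪normalizedSignVector σ, normalizedSignVector τ⟫_ℝ
      = (Fintype.card ι - 2 * hammingDist σ τ) / Fintype.card ι := by
  have hsq : √(Fintype.card ι : ℝ) * √(Fintype.card ι) = Fintype.card ι :=
    Real.mul_self_sqrt (Nat.cast_nonneg _)
  rw [← sum_units_mul_eq_card_sub_hammingDist, sum_div]
  simp only [normalizedSignVector, PiLp.inner_apply, RCLike.inner_apply, conj_trivial]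
  refine sum_congr rfl fun k _ => ?_
  push_cast
  rw [div_mul_div_comm, mul_comm, hsq]

lemma norm_normalizedSignVector [Nonempty ι] (σ : ι → ℤˣ) : ‖normalizedSignVector σ‖ = 1 := by
  have hcard : (Fintype.card ι : ℝ) ≠ 0 := by positivity
  rw [norm_eq_sqrt_re_inner (𝕜 := ℝ), RCLike.re_to_real, inner_normalizedSignVector,
    hammingDist_self]
  simp [hcard]

end SignVectors

lemma two_le_hammingDist_of_prod_eq {ι G : Type*} [Fintype ι] [DecidableEq ι] [CommGroup G]
    [DecidableEq G] {v w : ι → G} (hvw : v ≠ w) (hprod : ∏ k, v k = ∏ k, w k) :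
    2 ≤ hammingDist v w := by
  by_contra! hlt
  obtain ⟨k, hk⟩ : ∃ k, univ.filter (fun j => v j ≠ w j) = {k} := by
    rw [← card_eq_one]
    have := hammingDist_pos.2 hvw
    unfold hammingDist at hlt this
    omega
  have hrest : ∏ j ∈ univ.erase k, v j = ∏ j ∈ univ.erase k, w j := by
    refine prod_congr rfl fun j hj => ?_
    by_contra hne
    have : j ∈ univ.filter (fun j => v j ≠ w j) := by simpa using hne
    rw [hk, mem_singleton] at this
    exact (ne_of_mem_erase hj) this
  have hvk : v k ≠ w k := by
    have : k ∈ univ.filter (fun j => v j ≠ w j) := hk ▸ mem_singleton_self k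
    simpa using this
  apply hvk
  rw [← mul_prod_erase univ v (mem_univ k), ← mul_prod_erase univ w (mem_univ k), hrest] at hprod
  exact mul_right_cancel hprod

section ParityCode

variable {n : ℕ}

def parityExtend (σ : Fin n → ℤˣ) : Fin (n + 1) → ℤˣ := Fin.snoc σ (∏ k, σ k)

lemma prod_parityExtend (σ : Fin n → ℤˣ) : ∏ k, parityExtend σ k = 1 := by
  simp [parityExtend, Fin.prod_univ_castSucc, Int.units_mul_self]

lemma parityExtend_injective : Function.Injective (parityExtend (n := n)) := fun σ τ h => by
  simpa [parityExtend] using congrArg Fin.init h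

end ParityCode

theorem exists_parity_code_inner_le (n : ℕ) :
    ∃ x : (Fin n → ℤˣ) → EuclideanSpace ℝ (Fin (n + 1)),
      (∀ σ, ‖x σ‖ = 1) ∧ ∀ σ τ, σ ≠ τ → ⟪x σ, x τ⟫_ℝ ≤ ((n : ℝ) - 3) / (n + 1) := by
  refine ⟨fun σ => normalizedSignVector (parityExtend σ), fun σ => norm_normalizedSignVector _,
    fun σ τ hστ => ?_⟩
  have hdist : 2 ≤ hammingDist (parityExtend σ) (parityExtend τ) :=
    two_le_hammingDist_of_prod_eq (parityExtend_injective.ne hστ)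
      (by rw [prod_parityExtend, prod_parityExtend])
  rw [inner_normalizedSignVector, Fintype.card_fin]
  push_cast
  gcongr ?_ / _
  have : (2 : ℝ) ≤ hammingDist (parityExtend σ) (parityExtend τ) := by exact_mod_cast hdist
  linarith

/-- There exist 16 unit vectors in `EuclideanSpace ℝ (Fin 5)` whose pairwise
inner products are all at most the stated bound. -/
theorem exists_spherical_code_16_points_dim5 :
    ∃ x : Fin 16 → EuclideanSpace ℝ (Fin 5),
      (∀ i, ‖x i‖ = 1) ∧ ∀ i j, i ≠ j → ⟪x i, x j⟫_ℝ ≤ 1 / 5 := by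
  obtain ⟨x, hnorm, hinner⟩ := exists_parity_code_inner_le 4
  have e : Fin 16 ≃ (Fin 4 → ℤˣ) := Fintype.equivOfCardEq (by simp [Fintype.card_units_int])
  refine ⟨x ∘ e, fun i => hnorm _, fun i j hij => ?_⟩
  have := hinner _ _ (e.injective.ne hij)
  norm_num at this
  exact this
end
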